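/- arXiv:1909.10466 — 8 statements merged into one kernel-verified Lean document; each statement's English description precedes it below -/
import Mathlib

section
/- Let x₀,…,xₘ ∈ ℂⁿ, X = [x₀ … x_{m−1}], Y = [x₁ … xₘ]. Suppose there exist distinct nonzero λ₁,…,λ_{r₁} ∈ ℂ, nonzero coefficients b₁,…,b_{r₂} ∈ ℂ, and linearly independent vectors v₁,…,v_{r₂} ∈ ℂⁿ with r₁ ≤ r₂ ≤ n, r₁ ≤ m, such that x₀ = Σ_{j=1}^{r₂} b_j v_j and x_k = Σ_{j=1}^{r₁} λ_j^k b_j v_j for k = 1,…,m. Then the system matrix A = Y X⁺ satisfies A X = Y. -/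
open Matrix

def IsMoorePenrose {n m : ℕ} (X : Matrix (Fin n) (Fin m) ℂ)
    (P : Matrix (Fin m) (Fin n) ℂ) : Prop :=
  X * P * X = X ∧ P * X * P = P ∧ (X * P)ᴴ = X * P ∧ (P * X)ᴴ = P * X

lemma exists_linearMap_of_li {n r₂ : ℕ} (v : Fin r₂ → Fin n → ℂ)
    (hv : LinearIndependent ℂ v) (w : Fin r₂ → Fin n → ℂ) :
    ∃ L : (Fin n → ℂ) →ₗ[ℂ] (Fin n → ℂ), ∀ j, L (v j) = w j := by
  obtain ⟨q, hq⟩ := Submodule.exists_isCompl (Submodule.span ℂ (Set.range v))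
  refine ⟨(Finsupp.linearCombination ℂ w).comp ((hv.repr : _ →ₗ[ℂ] _).comp
    (Submodule.linearProjOfIsCompl _ q hq)), fun j => ?_⟩
  have hmem : v j ∈ Submodule.span ℂ (Set.range v) := Submodule.subset_span ⟨j, rfl⟩
  have h1 : Submodule.linearProjOfIsCompl _ q hq (v j) = ⟨v j, hmem⟩ :=
    Submodule.linearProjOfIsCompl_apply_left hq ⟨v j, hmem⟩
  have h2 : hv.repr ⟨v j, hmem⟩ = Finsupp.single j 1 :=
    hv.repr_eq_single j ⟨v j, hmem⟩ rfl
  simp [h1, h2]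

theorem stmt4 {n m r₁ r₂ : ℕ} (x : Fin (m + 1) → Fin n → ℂ)
    (X Y : Matrix (Fin n) (Fin m) ℂ)
    (hX : X = Matrix.of fun i j => x j.castSucc i)
    (hY : Y = Matrix.of fun i j => x j.succ i)
    (P : Matrix (Fin m) (Fin n) ℂ) (hP : IsMoorePenrose X P)
    (A : Matrix (Fin n) (Fin n) ℂ) (hA : A = Y * P)
    (h12 : r₁ ≤ r₂) (h2n : r₂ ≤ n) (h1m : r₁ ≤ m)
    (lam : Fin r₁ → ℂ) (hlinj : Function.Injective lam) (hlne : ∀ j, lam j ≠ 0)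
    (b : Fin r₂ → ℂ) (hbne : ∀ j, b j ≠ 0)
    (v : Fin r₂ → Fin n → ℂ) (hv : LinearIndependent ℂ v)
    (hx0 : x 0 = ∑ j, b j • v j)
    (hxk : ∀ k : Fin (m + 1), k ≠ 0 →
      x k = ∑ j : Fin r₁,
        (lam j ^ (k : ℕ) * b (Fin.castLE h12 j)) • v (Fin.castLE h12 j)) :
    A * X = Y := by
  classical
  -- target values for the linear map
  set w : Fin r₂ → Fin n → ℂ :=
    fun j => if h : (j : ℕ) < r₁ then lam ⟨j, h⟩ • v j else 0 with hw
  obtain ⟨L, hL⟩ := exists_linearMap_of_li v hv w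
  -- reindexing lemma
  have reidx : ∀ (f : Fin r₂ → Fin n → ℂ),
      (∀ j : Fin r₂, ¬ (j : ℕ) < r₁ → f j = 0) →
      ∑ j : Fin r₂, f j = ∑ j : Fin r₁, f (Fin.castLE h12 j) := by
    intro f hf
    rw [show ∑ j : Fin r₁, f (Fin.castLE h12 j)
        = ∑ j ∈ Finset.univ.map ⟨Fin.castLE h12, Fin.castLE_injective h12⟩, f j from
      (Finset.sum_map Finset.univ ⟨Fin.castLE h12, Fin.castLE_injective h12⟩ f).symm]
    refine (Finset.sum_subset (Finset.subset_univ _) ?_).symm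
    intro j _ hj
    refine hf j fun hlt => hj ?_
    simp only [Finset.mem_map, Finset.mem_univ, Function.Embedding.coeFn_mk]
    exact ⟨⟨(j : ℕ), hlt⟩, by trivial, by ext; simp⟩
  -- L maps each column of X to the corresponding column of Y
  have hcol : ∀ k : Fin m, L (x k.castSucc) = x k.succ := by
    intro k
    have hks : (k.succ : Fin (m+1)) ≠ 0 := by
      simp [Fin.ext_iff]
    have hsucc : ((k.succ : Fin (m+1)) : ℕ) = (k : ℕ) + 1 := rfl
    by_cases hk0 : (k : ℕ) = 0
    · have hc0 : (k.castSucc : Fin (m+1)) = 0 := by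
        ext; simpa using hk0
      rw [hc0, hx0, map_sum]
      simp only [_root_.map_smul, hL]
      rw [reidx _ (by
        intro j hj
        simp [hw, hj])]
      rw [hxk k.succ hks]
      refine Finset.sum_congr rfl fun j _ => ?_
      have hjlt : ((Fin.castLE h12 j : Fin r₂) : ℕ) < r₁ := j.2
      simp only [hw, dif_pos hjlt]
      have : (⟨((Fin.castLE h12 j : Fin r₂) : ℕ), hjlt⟩ : Fin r₁) = j := by ext; simp
      rw [this, smul_smul, hsucc, hk0, pow_one, mul_comm]
    · have hc0 : (k.castSucc : Fin (m+1)) ≠ 0 := by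
        simp [Fin.ext_iff, hk0]
      rw [hxk _ hc0, map_sum]
      simp only [_root_.map_smul, hL]
      rw [hxk k.succ hks]
      refine Finset.sum_congr rfl fun j _ => ?_
      have hjlt : ((Fin.castLE h12 j : Fin r₂) : ℕ) < r₁ := j.2
      simp only [hw, dif_pos hjlt]
      have hje : (⟨((Fin.castLE h12 j : Fin r₂) : ℕ), hjlt⟩ : Fin r₁) = j := by ext; simp
      rw [hje, smul_smul, hsucc]
      have hcs : ((k.castSucc : Fin (m+1)) : ℕ) = (k : ℕ) := rfl
      rw [hcs]
      ring_nf
  -- the matrix of L satisfies Astar * X = Y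
  set Astar : Matrix (Fin n) (Fin n) ℂ := LinearMap.toMatrix' L with hAstar
  have hmul : ∀ u : Fin n → ℂ, Astar *ᵥ u = L u := by
    intro u
    rw [← Matrix.toLin'_apply, hAstar, Matrix.toLin'_toMatrix']
  have hAX : Astar * X = Y := by
    ext i k
    have : (Astar * X) i k = (Astar *ᵥ fun l => X l k) i := by
      simp [Matrix.mul_apply, Matrix.mulVec, dotProduct]
    rw [this, hmul]
    have hXcol : (fun l => X l k) = x k.castSucc := by
      funext l; rw [hX]; rfl
    rw [hXcol, hcol, hY]
    rfl
  calc A * X = Astar * X * P * X := by rw [hA, hAX, Matrix.mul_assoc]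
    _ = Astar * (X * P * X) := by rw [Matrix.mul_assoc, Matrix.mul_assoc, Matrix.mul_assoc]
    _ = Astar * X := by rw [hP.1]
    _ = Y := hAX
end

section
/- Let x₀,…,xₘ ∈ ℂⁿ, X = [x₀ … x_{m−1}], Y = [x₁ … xₘ], A = Y X⁺. Assume: (a) ker(X) ⊆ ker(Y); (b) A is diagonalizable with distinct nonzero eigenvalues; (c) rank(Y) = r₁. Then there exist distinct nonzero λ₁,…,λ_{r₁} ∈ ℂ (the nonzero eigenvalues of A), nonzero coefficients b₁,…,b_{r₂} and linearly independent eigenvectors v₁,…,v_{r₂} of A with r₁ ≤ r₂ ≤ n and r₁ ≤ m such that x₀ = Σ_{j=1}^{r₂} b_j v_j and x_k = Σ_{j=1}^{r₁} λ_j^k b_j v_j for k = 1,…,m. -/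
/-!
Since `X P X = X`, condition (a) gives `Y P X = Y`, i.e. `A X = Y`, so `x k = A ^ k x 0`.
Expanding `x 0 = ∑ cᵢ sᵢ` in the eigenbasis of columns of `S`, where `A = S D S⁻¹`, gives
`x k = ∑ dᵢ ^ k cᵢ sᵢ`. The `v`'s are the `sᵢ` with `cᵢ ≠ 0`, those with `dᵢ ≠ 0` listed first.
There are `rank Y` of the latter: the columns `x 1, …, x m` of `Y` lie in their span, and there
are at most as many of them as nonzero eigenvalues of `A`, i.e. at most `rank A ≤ rank Y`.
-/

open Matrix

open Finset Function

namespace Matrix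

section CommRing

variable {R : Type*} [CommRing R] {ι κ ν : Type*}

theorem mul_mul_eq_of_ker_le [Fintype ι] [Fintype κ] {X : Matrix ι κ R} {Y : Matrix ν κ R}
    {P : Matrix κ ι R} (hXPX : X * P * X = X) (hker : ∀ z, X *ᵥ z = 0 → Y *ᵥ z = 0) :
    Y * P * X = Y := by
  refine ext_iff_mulVec.2 fun z => ?_
  have hXz : X *ᵥ (P *ᵥ X *ᵥ z - z) = 0 := by
    rw [mulVec_sub, mulVec_mulVec, mulVec_mulVec, hXPX, sub_self]
  rw [← mulVec_mulVec, ← mulVec_mulVec, ← sub_eq_zero, ← mulVec_sub]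
  exact hker _ hXz

theorem mulVec_col_of_mul_eq [Fintype ι] {A : Matrix ν ι R} {X : Matrix ι κ R} {Y : Matrix ν κ R}
    (h : A * X = Y) (j : κ) : A *ᵥ X.col j = Y.col j := by
  ext i
  rw [← h]
  rfl

variable [Fintype ι] [DecidableEq ι]

theorem eq_pow_mulVec_of_mul_eq {m : ℕ} {x : Fin (m + 1) → ι → R} {A : Matrix ι ι R}
    (h : A * of (fun i j => x (Fin.castSucc j) i) = of fun i j => x j.succ i)
    (k : Fin (m + 1)) : x k = (A ^ (k : ℕ)) *ᵥ x 0 := by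
  induction k using Fin.induction with
  | zero => simp
  | succ j ih =>
    rw [Fin.val_succ, pow_succ', ← mulVec_mulVec, ← Fin.val_castSucc, ← ih]
    exact (mulVec_col_of_mul_eq h j).symm

theorem pow_mulVec_mulVec_of_mul_eq_mul_diagonal {A S : Matrix ι ι R} {d : ι → R}
    (h : A * S = S * diagonal d) (k : ℕ) (c : ι → R) :
    (A ^ k) *ᵥ S *ᵥ c = ∑ i, (d i ^ k * c i) • S.col i := by
  have hk : A ^ k * S = S * diagonal (d ^ k) := by
    rw [← diagonal_pow]
    exact ((show SemiconjBy S (diagonal d) A from h.symm).pow_right k).symm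
  rw [mulVec_mulVec, hk, ← mulVec_mulVec, mulVec_eq_sum]
  simp only [mulVec_diagonal, Pi.pow_apply, op_smul_eq_smul, col, mul_comm]

theorem mulVec_col_of_mul_eq_mul_diagonal {A S : Matrix ι ι R} {d : ι → R}
    (h : A * S = S * diagonal d) (i : ι) : A *ᵥ S.col i = d i • S.col i := by
  rw [mulVec_col_of_mul_eq h]
  ext j
  simp [mul_comm]

end CommRing

section Field

variable {K : Type*} [Field K] {ι κ α : Type*} [Fintype ι] [Fintype κ]

theorem rank_le_card_of_col_mem_span {M : Matrix ι κ K} (s : α → ι → K)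
    (T : Finset α) (h : ∀ j, M.col j ∈ Submodule.span K (s '' T)) : M.rank ≤ #T := by
  classical
  rw [rank_eq_finrank_span_cols]
  calc _ ≤ Module.finrank K (Submodule.span K (s '' T)) :=
        Submodule.finrank_mono (Submodule.span_le.2 (Set.range_subset_iff.2 h))
    _ ≤ #T := by
        rw [← coe_image]
        exact (finrank_span_finset_le_card _).trans card_image_le

variable [DecidableEq ι]

theorem rank_mul_diagonal_mul_nonsing_inv [DecidableEq K] {S : Matrix ι ι K} (hS : IsUnit S.det)
    (d : ι → K) : (S * diagonal d * S⁻¹).rank = #{i | d i ≠ 0} := by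
  rw [rank_mul_eq_left_of_isUnit_det _ _ (isUnit_nonsing_inv_det S hS),
    rank_mul_eq_right_of_isUnit_det _ _ hS, rank_diagonal, Fintype.card_subtype]

end Field

end Matrix

namespace Finset

variable {α M : Type*} [AddCommMonoid M]

theorem sum_equivFin_symm (s : Finset α) (f : α → M) :
    ∑ j, f (s.equivFin.symm j) = ∑ i ∈ s, f i := by
  rw [Equiv.sum_comp s.equivFin.symm (fun i : s => f i), sum_coe_sort]

variable (s t : Finset α)

noncomputable def enumAppend : Fin (#s + #t) → α :=
  Fin.append (fun j => s.equivFin.symm j) (fun j => t.equivFin.symm j)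

@[simp]
theorem enumAppend_castAdd (j : Fin #s) :
    enumAppend s t (Fin.castAdd #t j) = s.equivFin.symm j :=
  Fin.append_left _ _ j

@[simp]
theorem enumAppend_natAdd (j : Fin #t) :
    enumAppend s t (Fin.natAdd #s j) = t.equivFin.symm j :=
  Fin.append_right _ _ j

theorem enumAppend_mem_union [DecidableEq α] (j : Fin (#s + #t)) : enumAppend s t j ∈ s ∪ t := by
  induction j using Fin.addCases <;> simp

theorem enumAppend_mem_right {j : Fin (#s + #t)} (hj : #s ≤ j) : enumAppend s t j ∈ t := by
  induction j using Fin.addCases with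
  | left j => exact absurd hj (not_le.2 j.isLt)
  | right j => simp

variable {s t}

theorem enumAppend_injective (h : Disjoint s t) : Injective (enumAppend s t) :=
  Fin.append_injective_iff.2 ⟨Subtype.val_injective.comp s.equivFin.symm.injective,
    Subtype.val_injective.comp t.equivFin.symm.injective,
    fun i j hij => disjoint_left.1 h (coe_mem _) (by rw [hij]; exact coe_mem _)⟩

theorem sum_enumAppend [DecidableEq α] (h : Disjoint s t) (f : α → M) :
    ∑ j, f (enumAppend s t j) = ∑ i ∈ s ∪ t, f i := by
  rw [Fin.sum_univ_add, sum_union h]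
  simp only [enumAppend_castAdd, enumAppend_natAdd, sum_equivFin_symm]

end Finset

section EigenvectorExpansion

variable {K V ι : Type*} [Field K] [DecidableEq K] [AddCommGroup V] [Module K V] [Fintype ι]

theorem sum_pow_mul_smul_eq_sum_filter (s : ι → V) (d c : ι → K) {k : ℕ} (hk : k ≠ 0) :
    ∑ i, (d i ^ k * c i) • s i = ∑ i with c i ≠ 0 ∧ d i ≠ 0, (d i ^ k * c i) • s i :=
  (sum_filter_of_ne fun i _ h =>
    ⟨fun hc => h (by simp [hc]), fun hd => h (by simp [hd, zero_pow hk])⟩).symm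

theorem sum_pow_mul_smul_mem_span (s : ι → V) (d c : ι → K) {k : ℕ} (hk : k ≠ 0) :
    ∑ i, (d i ^ k * c i) • s i ∈ Submodule.span K (s '' ({i | c i ≠ 0 ∧ d i ≠ 0} : Finset ι)) := by
  rw [sum_pow_mul_smul_eq_sum_filter s d c hk]
  exact Submodule.sum_mem _ fun i hi =>
    Submodule.smul_mem _ _ (Submodule.subset_span (Set.mem_image_of_mem s hi))

theorem exists_eigenvector_expansion {m r₁ : ℕ} (x : Fin (m + 1) → V) (f : Module.End K V)
    (s : ι → V) (hs : LinearIndependent K s) (d c : ι → K) (hfs : ∀ i, f (s i) = d i • s i)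
    (hd : ∀ i j, d i = d j → d i ≠ 0 → i = j)
    (hx : ∀ k : Fin (m + 1), x k = ∑ i, (d i ^ (k : ℕ) * c i) • s i)
    (hr₁ : #{i | c i ≠ 0 ∧ d i ≠ 0} = r₁) :
    ∃ (r₂ : ℕ) (h12 : r₁ ≤ r₂), r₂ ≤ Fintype.card ι ∧
      ∃ (lam : Fin r₁ → K) (b : Fin r₂ → K) (v : Fin r₂ → V),
        Injective lam ∧ (∀ j, lam j ≠ 0) ∧ (∀ j, b j ≠ 0) ∧ LinearIndependent K v ∧
        (∀ j : Fin r₁, f (v (Fin.castLE h12 j)) = lam j • v (Fin.castLE h12 j)) ∧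
        (∀ j : Fin r₂, r₁ ≤ (j : ℕ) → f (v j) = 0) ∧
        x 0 = ∑ j, b j • v j ∧
        (∀ k : Fin (m + 1), k ≠ 0 →
          x k = ∑ j : Fin r₁,
            (lam j ^ (k : ℕ) * b (Fin.castLE h12 j)) • v (Fin.castLE h12 j)) := by
  classical
  subst hr₁
  set T₁ : Finset ι := {i | c i ≠ 0 ∧ d i ≠ 0}
  set T₀ : Finset ι := {i | c i ≠ 0 ∧ d i = 0}
  have hT : Disjoint T₁ T₀ := disjoint_filter.2 fun i _ h₁ h₀ => h₁.2 h₀.2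
  have hT₁₀ : T₁ ∪ T₀ = ({i | c i ≠ 0} : Finset ι) := by
    ext i
    simp only [T₁, T₀, mem_union, mem_filter, mem_univ, true_and]
    tauto
  -- `Fin.castLE` along `#T₁ ≤ #T₁ + #T₀` is `Fin.castAdd #T₀` definitionally.
  have he₁ : ∀ j, enumAppend T₁ T₀ (Fin.castLE (Nat.le_add_right _ _) j) = T₁.equivFin.symm j :=
    enumAppend_castAdd T₁ T₀
  have hT₁ : ∀ j, c (T₁.equivFin.symm j) ≠ 0 ∧ d (T₁.equivFin.symm j) ≠ 0 := fun j =>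
    (mem_filter.1 (T₁.equivFin.symm j).2).2
  refine ⟨#T₁ + #T₀, Nat.le_add_right _ _, card_union_of_disjoint hT ▸ card_le_univ _,
    fun j => d (T₁.equivFin.symm j), fun j => c (enumAppend T₁ T₀ j),
    fun j => s (enumAppend T₁ T₀ j),
    fun j j' h => T₁.equivFin.symm.injective (Subtype.ext (hd _ _ h (hT₁ j).2)),
    fun j => (hT₁ j).2, fun j => by simpa [hT₁₀] using enumAppend_mem_union T₁ T₀ j,
    hs.comp _ (enumAppend_injective hT), fun j => by dsimp only; rw [he₁, hfs],
    fun j hj => ?_, ?_, fun k hk => ?_⟩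
  · rw [hfs, (mem_filter.1 (enumAppend_mem_right T₁ T₀ hj)).2.2, zero_smul]
  · rw [hx 0, sum_enumAppend hT (fun i => c i • s i), hT₁₀]
    simp only [Fin.val_zero, pow_zero, one_mul]
    refine (sum_filter_of_ne fun i _ h => ?_).symm
    intro hc
    simp [hc] at h
  · rw [hx k, sum_pow_mul_smul_eq_sum_filter s d c (Fin.val_ne_zero_iff.2 hk),
      ← sum_equivFin_symm T₁]
    simp only [he₁]

end EigenvectorExpansion

theorem stmt5 {n m r₁ : ℕ} (x : Fin (m + 1) → Fin n → ℂ)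
    (X Y : Matrix (Fin n) (Fin m) ℂ)
    (hX : X = Matrix.of fun i j => x j.castSucc i)
    (hY : Y = Matrix.of fun i j => x j.succ i)
    (P : Matrix (Fin m) (Fin n) ℂ) (hP : IsMoorePenrose X P)
    (A : Matrix (Fin n) (Fin n) ℂ) (hA : A = Y * P)
    -- (a) ker X ⊆ ker Y
    (hker : ∀ z : Fin m → ℂ, X.mulVec z = 0 → Y.mulVec z = 0)
    -- (b) A diagonalizable, with the nonzero eigenvalues distinct
    (hdiag : ∃ (S : Matrix (Fin n) (Fin n) ℂ) (d : Fin n → ℂ),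
      IsUnit S.det ∧ A = S * Matrix.diagonal d * S⁻¹ ∧
        ∀ i j, d i = d j → d i ≠ 0 → i = j)
    -- (c) rank Y = r₁
    (hrank : Y.rank = r₁) :
    ∃ (r₂ : ℕ) (h12 : r₁ ≤ r₂), r₂ ≤ n ∧ r₁ ≤ m ∧
      ∃ (lam : Fin r₁ → ℂ) (b : Fin r₂ → ℂ) (v : Fin r₂ → Fin n → ℂ),
        Function.Injective lam ∧ (∀ j, lam j ≠ 0) ∧ (∀ j, b j ≠ 0) ∧
        LinearIndependent ℂ v ∧
        (∀ j : Fin r₁,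
          A.mulVec (v (Fin.castLE h12 j)) = lam j • v (Fin.castLE h12 j)) ∧
        (∀ j : Fin r₂, r₁ ≤ (j : ℕ) → A.mulVec (v j) = 0) ∧
        x 0 = ∑ j, b j • v j ∧
        (∀ k : Fin (m + 1), k ≠ 0 →
          x k = ∑ j : Fin r₁,
            (lam j ^ (k : ℕ) * b (Fin.castLE h12 j)) • v (Fin.castLE h12 j)) := by
  obtain ⟨S, d, hS, hASd, hdist⟩ := hdiag
  have hAS : A * S = S * diagonal d := by
    rw [hASd, Matrix.mul_assoc _ S⁻¹, nonsing_inv_mul S hS, Matrix.mul_one]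
  have hAX : A * X = Y := hA ▸ mul_mul_eq_of_ker_le hP.1 hker
  set c := S⁻¹ *ᵥ x 0
  have hSc : S *ᵥ c = x 0 := by rw [mulVec_mulVec, mul_nonsing_inv S hS, one_mulVec]
  have hx : ∀ k : Fin (m + 1), x k = ∑ i, (d i ^ (k : ℕ) * c i) • S.col i := fun k => by
    rw [← pow_mulVec_mulVec_of_mul_eq_mul_diagonal hAS, hSc]
    exact eq_pow_mulVec_of_mul_eq (hX ▸ hY ▸ hAX) k
  have hr₁ : #{i | c i ≠ 0 ∧ d i ≠ 0} = r₁ := by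
    refine le_antisymm ?_ (hrank ▸ rank_le_card_of_col_mem_span S.col _ fun j => ?_)
    · calc #{i | c i ≠ 0 ∧ d i ≠ 0} ≤ #{i | d i ≠ 0} :=
            card_le_card (monotone_filter_right _ fun _ _ h => h.2)
        _ = A.rank := by rw [hASd, rank_mul_diagonal_mul_nonsing_inv hS]
        _ ≤ r₁ := hrank ▸ hA ▸ rank_mul_le_left Y P
    · rw [hY]
      show x j.succ ∈ _
      exact hx j.succ ▸ sum_pow_mul_smul_mem_span _ d c (Nat.succ_ne_zero j)
  obtain ⟨r₂, h12, hr₂, hexp⟩ := exists_eigenvector_expansion x A.mulVecLin S.col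
    (linearIndependent_cols_iff_isUnit.2 ((isUnit_iff_isUnit_det S).2 hS)) d c
    (mulVec_col_of_mul_eq_mul_diagonal hAS) hdist hx hr₁
  exact ⟨r₂, h12, Fintype.card_fin n ▸ hr₂, hrank ▸ Y.rank_le_width, hexp⟩
end

section
/- Let x₀,…,xₘ ∈ ℂⁿ with x₀,…,x_{m−1} linearly independent, X = [x₀ … x_{m−1}], Y = [x₁ … xₘ]. Then the companion matrix C_c to c = X⁺ xₘ equals the twisted system matrix C = X⁺ Y, and moreover C_c = X⁺ A X where A = Y X⁺. -/
open Matrix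

def companion {m : ℕ} (c : Fin m → ℂ) : Matrix (Fin m) (Fin m) ℂ :=
  Matrix.of fun i j =>
    if (j : ℕ) = m - 1 then c i else if (i : ℕ) = (j : ℕ) + 1 then 1 else 0

/-! Since `X` has independent columns, `X X⁺ X = X` cancels to `X⁺ X = 1`. The columns of `Y` are
those of `X` shifted one step to the left, followed by `xₘ`, so `X⁺` sends the shifted columns to
the unit vectors below the diagonal and `xₘ` to `c`: that is the companion matrix. Finally
`X⁺ A X = X⁺ Y (X⁺ X) = X⁺ Y`. -/

theorem Matrix.mul_eq_one_of_mul_mul_eq_self {ι κ R : Type*} [Fintype ι] [Fintype κ]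
    [DecidableEq κ] [CommRing R] {X : Matrix ι κ R} {P : Matrix κ ι R}
    (hX : LinearIndependent R X.col) (h : X * P * X = X) : P * X = 1 :=
  ext_iff_mulVec.2 fun v ↦ mulVec_injective_iff.2 hX <| by
    rw [mulVec_mulVec, ← Matrix.mul_assoc, h, one_mulVec]

theorem companion_mulVec_last_eq_mul {ι : Type*} [Fintype ι] {m : ℕ} (x : Fin (m + 1) → ι → ℂ)
    (P : Matrix (Fin m) ι ℂ) (hP : P * (of fun i (j : Fin m) => x j.castSucc i) = 1) :
    companion (P *ᵥ x (Fin.last m)) = P * of fun i (j : Fin m) => x j.succ i := by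
  have hcol (k : Fin m) : P *ᵥ x k.castSucc = Pi.single k 1 := by
    rw [← one_mulVec (Pi.single k 1), ← hP, ← mulVec_mulVec, mulVec_single_one]
    rfl
  ext i j
  rw [mul_apply, companion, of_apply]
  change _ = (P *ᵥ x j.succ) i
  rcases Fin.eq_castSucc_or_eq_last j.succ with ⟨k, hk⟩ | hlast
  · have hk_val : (k : ℕ) = j + 1 := by simpa using congr(($hk : ℕ)).symm
    have hj : (j : ℕ) ≠ m - 1 := by omega
    simp [hk, hcol, hj, Pi.single_apply, Fin.ext_iff, hk_val]
  · have hj : (j : ℕ) = m - 1 := by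
      have := congr(($hlast : ℕ))
      rw [Fin.val_succ, Fin.val_last] at this
      omega
    rw [if_pos hj, hlast]

theorem stmt8 {n m : ℕ} (x : Fin (m + 1) → Fin n → ℂ)
    (X Y : Matrix (Fin n) (Fin m) ℂ)
    (hX : X = Matrix.of fun i j => x j.castSucc i)
    (hY : Y = Matrix.of fun i j => x j.succ i)
    (hind : LinearIndependent ℂ (fun j : Fin m => x j.castSucc))
    (P : Matrix (Fin m) (Fin n) ℂ) (hP : IsMoorePenrose X P)
    (A : Matrix (Fin n) (Fin n) ℂ) (hA : A = Y * P)
    (C : Matrix (Fin m) (Fin m) ℂ) (hC : C = P * Y)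
    (c : Fin m → ℂ) (hc : c = P.mulVec (x (Fin.last m))) :
    companion c = C ∧ companion c = P * (A * X) := by
  have hPX : P * X = 1 := mul_eq_one_of_mul_mul_eq_self (by rwa [hX]) hP.1
  have hcomp : companion c = C := by
    rw [hc, hC, hY]
    exact companion_mulVec_last_eq_mul x P (hX ▸ hPX)
  refine ⟨hcomp, ?_⟩
  rw [hcomp, hC, hA, Matrix.mul_assoc Y, hPX, Matrix.mul_one]
end

section
/- Let x₀,…,xₘ ∈ ℂⁿ, X = [x₀ … x_{m−1}], c = X⁺ xₘ, q = xₘ − Xc, and let C_c be the companion matrix to c. Suppose C_c has distinct eigenvalues λ₁,…,λₘ with eigenvector matrix W^{−1} = [v₁ … vₘ]. Define DMD modes Θ = X W^{−1} and amplitudes K = diag(a₁,…,aₘ) = (Vand(λ₁,…,λₘ) W^{−1})^{−1}. Then x_k = Σ_{j=1}^m λ_j^k a_j ϑ_j for k = 0,…,m−1, and xₘ = Σ_{j=1}^m λ_j^m a_j ϑ_j + q. -/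
open Matrix

-- entry formula for companion.mulVec
lemma comp_mulVec {m : ℕ} (hm : 0 < m) (c : Fin m → ℂ) (v : Fin m → ℂ) (r : Fin m) :
    (companion c).mulVec v r = c r * v ⟨m - 1, Nat.sub_lt hm one_pos⟩ +
      (if h : (r : ℕ) = 0 then 0 else v ⟨(r : ℕ) - 1, lt_of_le_of_lt (Nat.sub_le _ _) r.isLt⟩) := by
  set last : Fin m := ⟨m - 1, Nat.sub_lt hm one_pos⟩ with hlast
  have key : ∀ k : Fin m, companion c r k * v k =
      (if k = last then c r * v k else 0) +
      (if k ≠ last ∧ (r : ℕ) = (k : ℕ) + 1 then v k else 0) := by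
    intro k
    by_cases hk : k = last
    · have hkk : (k : ℕ) = m - 1 := by rw [hk]
      simp [companion, hk, hkk, hlast]
    · have hkk : (k : ℕ) ≠ m - 1 := by
        intro h; exact hk (Fin.ext h)
      by_cases hr : (r : ℕ) = (k : ℕ) + 1
      · simp [companion, hkk, hk, hr]
      · simp [companion, hkk, hk, hr]
  rw [mulVec, dotProduct]
  simp only [key]
  rw [Finset.sum_add_distrib]
  congr 1
  · simp
  · by_cases h0 : (r : ℕ) = 0
    · rw [dif_pos h0]
      apply Finset.sum_eq_zero
      intro k _
      rw [if_neg]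
      rintro ⟨-, hr⟩
      omega
    · rw [dif_neg h0]
      have hrm : (r : ℕ) - 1 < m := lt_of_le_of_lt (Nat.sub_le _ _) r.isLt
      have hs := Finset.sum_eq_single (s := Finset.univ)
        (f := fun k : Fin m => if k ≠ last ∧ (r : ℕ) = (k : ℕ) + 1 then v k else 0)
        (⟨(r : ℕ) - 1, hrm⟩ : Fin m)
        (by
          intro k _ hk
          rw [if_neg]
          rintro ⟨-, hr⟩
          apply hk; apply Fin.ext; simp; omega)
        (by simp)
      rw [hs]
      dsimp only
      rw [if_pos]
      constructor
      · intro h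
        have h2 : (r : ℕ) - 1 = m - 1 := congrArg Fin.val h
        have h3 := r.isLt
        omega
      · omega

lemma comp_mulVec_succ {m : ℕ} (c : Fin (m+1) → ℂ) (v : Fin (m+1) → ℂ) (i : Fin m) :
    (companion c).mulVec v i.succ = c i.succ * v (Fin.last m) + v i.castSucc := by
  rw [comp_mulVec (Nat.succ_pos m), dif_neg (by simp)]
  congr 1

lemma comp_mulVec_zero {m : ℕ} (c : Fin (m+1) → ℂ) (v : Fin (m+1) → ℂ) :
    (companion c).mulVec v 0 = c 0 * v (Fin.last m) := by
  rw [comp_mulVec (Nat.succ_pos m), dif_pos (by simp), add_zero]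
  rfl

lemma eigen_last_ne_zero {m : ℕ} (c : Fin (m+1) → ℂ) (lam : ℂ) (v : Fin (m+1) → ℂ)
    (hv : (companion c).mulVec v = lam • v) (hne : v ≠ 0) : v (Fin.last m) ≠ 0 := by
  intro hs
  apply hne
  have key : ∀ t, t ≤ m → v ⟨m - t, by omega⟩ = 0 := by
    intro t
    induction t with
    | zero => intro _; simpa [Fin.last] using hs
    | succ t ih =>
      intro ht
      have ht' : t ≤ m := by omega
      set i : Fin m := ⟨m - (t+1), by omega⟩ with hi
      have hisucc : i.succ = (⟨m - t, by omega⟩ : Fin (m+1)) := Fin.ext (by simp [hi]; omega)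
      have h1 := congrFun hv i.succ
      rw [comp_mulVec_succ] at h1
      simp only [Pi.smul_apply, smul_eq_mul] at h1
      have h3 : v i.succ = 0 := by rw [hisucc]; exact ih ht'
      have h4 : v i.castSucc = 0 := by
        rw [hs, mul_zero, zero_add, h3, mul_zero] at h1
        exact h1
      have h5 : i.castSucc = (⟨m - (t+1), by omega⟩ : Fin (m+1)) := Fin.ext (by simp [hi])
      rw [← h5]
      exact h4
  funext r
  have hr : r = (⟨m - (m - (r:ℕ)), by omega⟩ : Fin (m+1)) := Fin.ext (by simp; omega)
  rw [hr]
  exact key _ (by omega)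

lemma eigen_root {m : ℕ} (c : Fin (m+1) → ℂ) (lam : ℂ) (v : Fin (m+1) → ℂ)
    (hv : (companion c).mulVec v = lam • v) (hne : v ≠ 0) :
    lam ^ (m+1) = ∑ k, c k * lam ^ (k : ℕ) := by
  have hs := eigen_last_ne_zero c lam v hv hne
  have key : (∑ r : Fin (m+1), lam ^ (r : ℕ) * ((companion c).mulVec v r)) =
      (∑ r : Fin (m+1), lam ^ (r : ℕ) * (lam * v r)) := by
    rw [hv]; simp [Pi.smul_apply, smul_eq_mul]
  have e0 : ∀ i : Fin m, lam ^ ((i.succ : Fin (m+1)) : ℕ) * ((companion c).mulVec v i.succ)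
      = c i.succ * lam ^ ((i:ℕ)+1) * v (Fin.last m) + lam ^ ((i:ℕ)+1) * v i.castSucc := by
    intro i; rw [comp_mulVec_succ, Fin.val_succ]; ring
  have hL : (∑ r : Fin (m+1), lam ^ (r : ℕ) * ((companion c).mulVec v r)) =
      (∑ k, c k * lam ^ (k : ℕ)) * v (Fin.last m) +
      ∑ i : Fin m, lam ^ ((i : ℕ) + 1) * v i.castSucc := by
    rw [Fin.sum_univ_succ, comp_mulVec_zero, Finset.sum_congr rfl (fun i _ => e0 i),
        Finset.sum_add_distrib, Fin.sum_univ_succ (f := fun k : Fin (m+1) => c k * lam ^ (k:ℕ)),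
        add_mul, Finset.sum_mul]
    simp only [Fin.val_zero, pow_zero, one_mul, Fin.val_succ]
    ring
  have hR : (∑ r : Fin (m+1), lam ^ (r : ℕ) * (lam * v r)) =
      (∑ i : Fin m, lam ^ ((i : ℕ) + 1) * v i.castSucc) + lam ^ (m+1) * v (Fin.last m) := by
    rw [Fin.sum_univ_castSucc (f := fun r : Fin (m+1) => lam ^ (r : ℕ) * (lam * v r))]
    simp only [Fin.coe_castSucc, Fin.val_last]
    congr 1
    · exact Finset.sum_congr rfl fun i _ => by ring
    · ring
  rw [hL, hR] at key
  have h2 : (∑ k, c k * lam ^ (k : ℕ)) * v (Fin.last m) = lam ^ (m+1) * v (Fin.last m) := by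
    linear_combination key
  exact (mul_right_cancel₀ hs h2).symm

lemma vand_comp {m : ℕ} (c : Fin (m+1) → ℂ) (lam : Fin (m+1) → ℂ)
    (hroot : ∀ i, lam i ^ (m+1) = ∑ k, c k * lam i ^ (k : ℕ)) :
    vandermonde lam * companion c = diagonal lam * vandermonde lam := by
  ext i j
  rw [mul_apply, diagonal_mul, vandermonde_apply]
  by_cases hj : (j : ℕ) = m
  · have h1 : ∀ k : Fin (m+1), vandermonde lam i k * companion c k j = lam i ^ (k:ℕ) * c k := by
      intro k; rw [vandermonde_apply]; simp [companion, hj]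
    rw [Finset.sum_congr rfl (fun k _ => h1 k)]
    have h2 : ∑ k : Fin (m+1), lam i ^ (k:ℕ) * c k = ∑ k, c k * lam i ^ (k:ℕ) :=
      Finset.sum_congr rfl fun k _ => by ring
    rw [h2, ← hroot i, hj, pow_succ']
  · have hjm : (j : ℕ) + 1 < m + 1 := by have := j.isLt; omega
    have hs := Finset.sum_eq_single (s := Finset.univ)
      (f := fun k : Fin (m+1) => vandermonde lam i k * companion c k j)
      (⟨(j : ℕ) + 1, hjm⟩ : Fin (m+1))
      (by
        intro k _ hk
        have hkj : (k : ℕ) ≠ (j : ℕ) + 1 := fun h => hk (Fin.ext h)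
        simp [companion, hj, hkj])
      (by simp)
    rw [hs]
    rw [vandermonde_apply]
    simp [companion, hj]
    rw [pow_succ]
    ring

theorem stmt10 {n m : ℕ} (x : Fin (m + 1) → Fin n → ℂ)
    (X Y : Matrix (Fin n) (Fin m) ℂ)
    (hX : X = Matrix.of fun i j => x j.castSucc i)
    (hY : Y = Matrix.of fun i j => x j.succ i)
    (P : Matrix (Fin m) (Fin n) ℂ) (hP : IsMoorePenrose X P)
    (c : Fin m → ℂ) (hc : c = P.mulVec (x (Fin.last m)))
    (q : Fin n → ℂ) (hq : q = x (Fin.last m) - X.mulVec c)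
    (lam : Fin m → ℂ) (hinj : Function.Injective lam)
    (W : Matrix (Fin m) (Fin m) ℂ)
    (hWeig : ∀ j, (companion c).mulVec (fun i => W i j) = lam j • fun i => W i j)
    (hWne : ∀ j, (fun i => W i j) ≠ (0 : Fin m → ℂ))
    (Θ : Matrix (Fin n) (Fin m) ℂ) (hΘ : Θ = X * W)
    (a : Fin m → ℂ)
    (ha : a = fun j => (Matrix.vandermonde lam * W)⁻¹ j j) :
    (Matrix.vandermonde lam * W)⁻¹ = Matrix.diagonal a ∧
    (∀ k : Fin m,
      x k.castSucc = ∑ j, (lam j ^ (k : ℕ) * a j) • (fun i => Θ i j)) ∧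
    x (Fin.last m) = (∑ j, (lam j ^ m * a j) • (fun i => Θ i j)) + q := by
  rcases Nat.eq_zero_or_pos m with hm | hm
  · subst hm
    refine ⟨Subsingleton.elim _ _, fun k => k.elim0, ?_⟩
    rw [Finset.univ_eq_empty, Finset.sum_empty, zero_add, hq]
    have hz : X.mulVec c = 0 := by funext i; simp [mulVec, dotProduct]
    rw [hz, sub_zero]
  obtain ⟨m', rfl⟩ : ∃ m', m = m' + 1 := ⟨m - 1, by omega⟩
  set C := companion c with hC
  set V := vandermonde lam with hV
  -- root property
  have hroot : ∀ j, lam j ^ (m'+1) = ∑ k, c k * lam j ^ (k:ℕ) := fun j =>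
    eigen_root c (lam j) _ (hWeig j) (hWne j)
  have hVC : V * C = diagonal lam * V := vand_comp c lam hroot
  have hCW : C * W = W * diagonal lam := by
    ext i j
    have h := congrFun (hWeig j) i
    simp only [Pi.smul_apply, smul_eq_mul] at h
    rw [mul_apply, mul_diagonal, mul_comm, ← h]
    rfl
  have hcomm : diagonal lam * (V * W) = (V * W) * diagonal lam := by
    calc diagonal lam * (V * W) = (diagonal lam * V) * W := by rw [Matrix.mul_assoc]
      _ = (V * C) * W := by rw [hVC]
      _ = V * (C * W) := by rw [Matrix.mul_assoc]
      _ = V * (W * diagonal lam) := by rw [hCW]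
      _ = (V * W) * diagonal lam := by rw [Matrix.mul_assoc]
  set M := V * W with hM
  have hMdiag : M = diagonal (fun j => M j j) := by
    ext i j
    by_cases hij : i = j
    · subst hij; simp [diagonal_apply_eq]
    · have h : (diagonal lam * M) i j = (M * diagonal lam) i j := by rw [hcomm]
      rw [diagonal_mul, mul_diagonal] at h
      have h2 : (lam i - lam j) * M i j = 0 := by linear_combination h
      have h3 : M i j = 0 := by
        rcases mul_eq_zero.1 h2 with h4 | h4
        · exact absurd (hinj (sub_eq_zero.1 h4)) hij
        · exact h4
      rw [h3, diagonal_apply_ne _ hij]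
  -- invertibility
  have hWunit : IsUnit W := by
    rw [← Matrix.linearIndependent_cols_iff_isUnit]
    apply Module.End.eigenvectors_linearIndependent' (Matrix.mulVecLin C) lam hinj
    intro j
    refine ⟨?_, ?_⟩
    · rw [Module.End.mem_eigenspace_iff]
      exact hWeig j
    · exact hWne j
  have hVunit : IsUnit V := by
    rw [Matrix.isUnit_iff_isUnit_det, isUnit_iff_ne_zero, hV,
      det_vandermonde_ne_zero_iff]
    exact hinj
  have hMunit : IsUnit M := hVunit.mul hWunit
  have hWdet : IsUnit W.det := (Matrix.isUnit_iff_isUnit_det W).1 hWunit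
  have hVdet : IsUnit V.det := (Matrix.isUnit_iff_isUnit_det V).1 hVunit
  have hd : ∀ j, M j j ≠ 0 := by
    have hdet : M.det ≠ 0 := by
      rcases (Matrix.isUnit_iff_isUnit_det M).1 hMunit with h
      exact h.ne_zero
    rw [hMdiag, det_diagonal] at hdet
    intro j
    exact Finset.prod_ne_zero_iff.1 hdet j (Finset.mem_univ j)
  have hMinv : M⁻¹ = diagonal (fun j => (M j j)⁻¹) := by
    apply Matrix.inv_eq_right_inv
    nth_rewrite 1 [hMdiag]
    have e : (fun j => M j j * (M j j)⁻¹) = fun _ => (1:ℂ) :=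
      funext fun j => mul_inv_cancel₀ (hd j)
    rw [diagonal_mul_diagonal, e, diagonal_one]
  have ha' : a = fun j => (M j j)⁻¹ := by
    funext j
    rw [ha]
    show M⁻¹ j j = _
    rw [hMinv, diagonal_apply_eq]
  have part1 : M⁻¹ = diagonal a := by rw [hMinv, ha']
  -- key identity
  have h1 : W * W⁻¹ = 1 := Matrix.mul_nonsing_inv W hWdet
  have h2 : V⁻¹ * V = 1 := Matrix.nonsing_inv_mul V hVdet
  have hkey : Θ * diagonal a * V = X := by
    rw [← part1, hΘ, hM, Matrix.mul_inv_rev]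
    calc X * W * (W⁻¹ * V⁻¹) * V
        = X * (W * W⁻¹) * (V⁻¹ * V) := by simp only [Matrix.mul_assoc]
      _ = X := by rw [h1, h2, Matrix.mul_one, Matrix.mul_one]
  refine ⟨part1, ?_, ?_⟩
  · intro k
    funext i
    rw [Finset.sum_apply]
    have hXik : x k.castSucc i = X i k := by rw [hX]; rfl
    rw [hXik, ← hkey, mul_apply]
    apply Finset.sum_congr rfl
    intro j _
    rw [mul_diagonal, hV, vandermonde_apply]
    simp only [Pi.smul_apply, smul_eq_mul]
    ring
  · funext i
    rw [Pi.add_apply, Finset.sum_apply]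
    have hqi : q i = x (Fin.last _) i - (X.mulVec c) i := by rw [hq]; rfl
    have hXc : (X.mulVec c) i = ∑ j, (lam j ^ (m'+1) * a j) * Θ i j := by
      rw [← hkey]
      calc ((Θ * diagonal a * V).mulVec c) i
          = ∑ k, (∑ j, (Θ * diagonal a) i j * V j k) * c k := by
            rw [mulVec, dotProduct]
            exact Finset.sum_congr rfl fun k _ => by rw [mul_apply]
        _ = ∑ j, ∑ k, (Θ * diagonal a) i j * V j k * c k := by
            simp only [Finset.sum_mul]
            rw [Finset.sum_comm]
        _ = ∑ j, (lam j ^ (m'+1) * a j) * Θ i j := by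
            apply Finset.sum_congr rfl
            intro j _
            have e1 : ∀ k : Fin (m'+1), (Θ * diagonal a) i j * V j k * c k
                = (Θ i j * a j) * (c k * lam j ^ (k:ℕ)) := by
              intro k; rw [mul_diagonal, hV, vandermonde_apply]; ring
            rw [Finset.sum_congr rfl fun k _ => e1 k, ← Finset.mul_sum, ← hroot j]
            ring
    simp only [Pi.smul_apply, smul_eq_mul]
    rw [hqi, hXc]
    ring
end

section
/- Let x₀,…,xₘ ∈ ℂⁿ, X = [x₀ … x_{m−1}] with reduced SVD X = U Σ V*, Y = [x₁ … xₘ], S = U* Y V Σ^{−1}, and C_c the companion matrix to c = X⁺ xₘ. Then S = (Σ V*) C_c (V Σ^{−1}). In particular, if x₀,…,x_{m−1} are linearly independent (so r = m), then S and C_c are similar. -/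
/-!
Since `X = U Σ V*` with `Σ` invertible, `U = X V Σ⁻¹` lies in the range of `X`, and the Penrose
identities `X X⁺ X = X`, `(X X⁺)* = X X⁺` then give `U* X X⁺ = U*`. Hence `U* X c = U* xₘ`: the
projected snapshots `U* xⱼ` end with a combination of the previous ones with coefficients `c`,
which is exactly what makes `C_c` shift them, `(U* X) C_c = U* Y`. Substituting `U* X = Σ V*`
gives the formula for `S`. If the `xⱼ` are independent then `r = rank X = m`, and `Σ V*` is
invertible with inverse `V Σ⁻¹`.
-/

open Matrix

theorem of_castSucc_mul_companion {k m : ℕ} (z : Fin (m + 1) → Fin k → ℂ) (c : Fin m → ℂ)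
    (hc : (of fun i j => z (Fin.castSucc j) i) *ᵥ c = z (Fin.last m)) :
    (of fun i j => z (Fin.castSucc j) i) * companion c = of fun i j => z j.succ i := by
  ext i j
  rw [mul_apply, of_apply]
  by_cases hj : (j : ℕ) = m - 1
  · have hlast : j.succ = Fin.last m := Fin.ext (by simp only [Fin.val_succ, Fin.val_last]; omega)
    simp only [companion, of_apply, hj, if_true, hlast, ← hc]
    rfl
  · have hlt : (j : ℕ) + 1 < m := by omega
    have hnext : ∀ l : Fin m, (l : ℕ) = j + 1 ↔ l = ⟨j + 1, hlt⟩ := fun l => by rw [Fin.ext_iff]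
    simp only [companion, of_apply, hj, if_false, hnext, mul_ite, mul_one, mul_zero,
      Finset.sum_ite_eq', Finset.mem_univ, if_true]
    rfl

theorem mul_of_cols {R k n m : Type*} [Fintype n] [NonUnitalNonAssocSemiring R]
    (A : Matrix k n R) (z : m → n → R) :
    A * (of fun i j => z j i) = of fun i j => (A *ᵥ z j) i := rfl

theorem rank_of_linearIndependent_cols {R n m : Type*} [Field R] [Fintype n] [Fintype m]
    {z : m → n → R} (h : LinearIndependent R z) : (of fun i j => z j i).rank = Fintype.card m := by
  rw [← rank_transpose]
  exact h.rank_matrix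

section SVD

variable {R n m r : Type*} [CommRing R] [StarRing R] [Fintype r] [DecidableEq r] {X : Matrix n m R}
  {U : Matrix n r R} {Sig : Matrix r r R} {V : Matrix m r R}

theorem conjTranspose_mul_eq_of_svd [Fintype n] (hU : Uᴴ * U = 1) (hSVD : X = U * Sig * Vᴴ) :
    Uᴴ * X = Sig * Vᴴ := by
  rw [hSVD, Matrix.mul_assoc, ← Matrix.mul_assoc Uᴴ, hU, Matrix.one_mul]

variable [Fintype m]

theorem mul_conjTranspose_mul_mul_inv (hV : Vᴴ * V = 1) (hSig : IsUnit Sig.det) :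
    Sig * Vᴴ * (V * Sig⁻¹) = 1 := by
  rw [Matrix.mul_assoc, ← Matrix.mul_assoc Vᴴ, hV, Matrix.one_mul, mul_nonsing_inv _ hSig]

theorem mul_eq_of_svd (hV : Vᴴ * V = 1) (hSig : IsUnit Sig.det) (hSVD : X = U * Sig * Vᴴ) :
    X * (V * Sig⁻¹) = U := by
  rw [hSVD, Matrix.mul_assoc U, Matrix.mul_assoc U, mul_conjTranspose_mul_mul_inv hV hSig,
    Matrix.mul_one]

end SVD

theorem conjTranspose_mul_mul_eq_of_isMoorePenrose {n m r : ℕ} {X : Matrix (Fin n) (Fin m) ℂ}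
    {P : Matrix (Fin m) (Fin n) ℂ} (hP : IsMoorePenrose X P) {U : Matrix (Fin n) (Fin r) ℂ}
    {W : Matrix (Fin m) (Fin r) ℂ} (hW : X * W = U) : Uᴴ * X * P = Uᴴ :=
  calc Uᴴ * X * P = (X * P * U)ᴴ := by rw [conjTranspose_mul, hP.2.2.1, Matrix.mul_assoc]
    _ = Uᴴ := by rw [← hW, ← Matrix.mul_assoc, hP.1]

theorem stmt13 {n m r : ℕ} (x : Fin (m + 1) → Fin n → ℂ)
    (X Y : Matrix (Fin n) (Fin m) ℂ)
    (hX : X = Matrix.of fun i j => x j.castSucc i)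
    (hY : Y = Matrix.of fun i j => x j.succ i)
    (U : Matrix (Fin n) (Fin r) ℂ) (V : Matrix (Fin m) (Fin r) ℂ)
    (σ : Fin r → ℝ) (hσ : ∀ i, σ i ≠ 0)
    (Sig : Matrix (Fin r) (Fin r) ℂ)
    (hSig : Sig = Matrix.diagonal fun i => (σ i : ℂ))
    (hU : Uᴴ * U = 1) (hV : Vᴴ * V = 1)
    (hSVD : X = U * Sig * Vᴴ) (hr : X.rank = r)
    (P : Matrix (Fin m) (Fin n) ℂ) (hP : IsMoorePenrose X P)
    (S : Matrix (Fin r) (Fin r) ℂ) (hS : S = Uᴴ * Y * (V * Sig⁻¹))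
    (c : Fin m → ℂ) (hc : c = P.mulVec (x (Fin.last m))) :
    S = (Sig * Vᴴ) * companion c * (V * Sig⁻¹) ∧
      (LinearIndependent ℂ (fun j : Fin m => x j.castSucc) →
        ∃ (hrm : r = m) (T : Matrix (Fin m) (Fin m) ℂ),
          IsUnit T.det ∧
            Matrix.reindex (finCongr hrm) (finCongr hrm) S =
              T * companion c * T⁻¹) := by
  have hSig_det : IsUnit Sig.det := by
    rw [hSig, det_diagonal]
    exact (Finset.prod_ne_zero_iff.mpr fun i _ => Complex.ofReal_ne_zero.mpr (hσ i)).isUnit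
  have hT := mul_conjTranspose_mul_mul_inv hV hSig_det
  have hUc : (Uᴴ * X) *ᵥ c = Uᴴ *ᵥ x (Fin.last m) := by
    rw [hc, mulVec_mulVec, conjTranspose_mul_mul_eq_of_isMoorePenrose hP
      (mul_eq_of_svd hV hSig_det hSVD)]
  have hshift : Uᴴ * X * companion c = Uᴴ * Y := by
    rw [hX, hY, mul_of_cols, mul_of_cols]
    rw [hX, mul_of_cols] at hUc
    exact of_castSucc_mul_companion (fun j => Uᴴ *ᵥ x j) c hUc
  have hS' : S = (Sig * Vᴴ) * companion c * (V * Sig⁻¹) := by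
    rw [hS, ← hshift, conjTranspose_mul_eq_of_svd hU hSVD]
  refine ⟨hS', fun hli => ?_⟩
  have hrm : r = m := by
    rw [← hr, hX, rank_of_linearIndependent_cols hli, Fintype.card_fin]
  subst hrm
  refine ⟨rfl, Sig * Vᴴ, isUnit_det_of_right_inverse hT, ?_⟩
  rw [inv_eq_right_inv hT]
  simpa using hS'
end

section
/- Let X = U Σ V* (reduced SVD, r = rank X), Y ∈ ℂ^{n×m}, A = Y X⁺, S = U* Y V Σ^{−1}. If v is an eigenvector of S with eigenvalue λ and ϑ = U v, then U U* A ϑ = λ ϑ, i.e., the SDMD eigenvalue equation holds up to the orthogonal projection P_X = X X⁺ = U U* onto im(X). -/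
open Matrix

lemma mp_unique {n m : ℕ} (X : Matrix (Fin n) (Fin m) ℂ)
    (P Q : Matrix (Fin m) (Fin n) ℂ)
    (hP : IsMoorePenrose X P) (hQ : IsMoorePenrose X Q) : P = Q := by
  obtain ⟨p1, p2, p3, p4⟩ := hP
  obtain ⟨q1, q2, q3, q4⟩ := hQ
  have hXP : X * P = X * Q := by
    calc X * P = Pᴴ * Xᴴ := by rw [← conjTranspose_mul, p3]
    _ = Pᴴ * (X * Q * X)ᴴ := by rw [q1]
    _ = Pᴴ * Xᴴ * (X * Q)ᴴ := by
        rw [conjTranspose_mul (X * Q) X]; simp only [Matrix.mul_assoc]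
    _ = (X * P) * (X * Q) := by rw [← conjTranspose_mul, p3, q3]
    _ = X * (P * X) * Q := by simp only [Matrix.mul_assoc]
    _ = X * Q := by rw [← Matrix.mul_assoc X P X, p1]
  have hPX : P * X = Q * X := by
    calc P * X = Xᴴ * Pᴴ := by rw [← conjTranspose_mul, p4]
    _ = (X * Q * X)ᴴ * Pᴴ := by rw [q1]
    _ = Xᴴ * Qᴴ * (Xᴴ * Pᴴ) := by
        rw [conjTranspose_mul (X * Q) X, conjTranspose_mul X Q]
        simp only [Matrix.mul_assoc]
    _ = (Q * X) * (P * X) := by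
        rw [← conjTranspose_mul Q X, ← conjTranspose_mul P X, q4, p4]
    _ = Q * (X * P * X) := by simp only [Matrix.mul_assoc]
    _ = Q * X := by rw [p1]
  calc P = P * X * P := p2.symm
  _ = Q * X * P := by rw [hPX]
  _ = Q * (X * P) := by rw [Matrix.mul_assoc]
  _ = Q * (X * Q) := by rw [hXP]
  _ = Q * X * Q := by rw [Matrix.mul_assoc]
  _ = Q := q2

theorem stmt14 {n m r : ℕ} (X Y : Matrix (Fin n) (Fin m) ℂ)
    (U : Matrix (Fin n) (Fin r) ℂ) (V : Matrix (Fin m) (Fin r) ℂ)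
    (σ : Fin r → ℝ) (hσ : ∀ i, σ i ≠ 0)
    (Sig : Matrix (Fin r) (Fin r) ℂ)
    (hSig : Sig = Matrix.diagonal fun i => (σ i : ℂ))
    (hU : Uᴴ * U = 1) (hV : Vᴴ * V = 1)
    (hSVD : X = U * Sig * Vᴴ) (hr : X.rank = r)
    (P : Matrix (Fin m) (Fin n) ℂ) (hP : IsMoorePenrose X P)
    (A : Matrix (Fin n) (Fin n) ℂ) (hA : A = Y * P)
    (S : Matrix (Fin r) (Fin r) ℂ) (hS : S = Uᴴ * Y * (V * Sig⁻¹))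
    (lam : ℂ) (v : Fin r → ℂ) (hv : v ≠ 0) (heig : S.mulVec v = lam • v)
    (ϑ : Fin n → ℂ) (hϑ : ϑ = U.mulVec v) :
    (U * Uᴴ * A).mulVec ϑ = lam • ϑ := by
  have hdet : IsUnit Sig.det := by
    rw [hSig, Matrix.det_diagonal]
    exact isUnit_iff_ne_zero.mpr (Finset.prod_ne_zero_iff.mpr
      fun i _ => by exact_mod_cast hσ i)
  have hSi : Sig * Sig⁻¹ = 1 := Matrix.mul_nonsing_inv _ hdet
  have hiS : Sig⁻¹ * Sig = 1 := Matrix.nonsing_inv_mul _ hdet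
  have hXQ : X * (V * Sig⁻¹ * Uᴴ) = U * Uᴴ := by
    rw [hSVD]
    calc U * Sig * Vᴴ * (V * Sig⁻¹ * Uᴴ)
        = U * Sig * (Vᴴ * V) * (Sig⁻¹ * Uᴴ) := by simp only [Matrix.mul_assoc]
    _ = U * (Sig * Sig⁻¹) * Uᴴ := by rw [hV, Matrix.mul_one]; simp only [Matrix.mul_assoc]
    _ = U * Uᴴ := by rw [hSi, Matrix.mul_one]
  have hQX : (V * Sig⁻¹ * Uᴴ) * X = V * Vᴴ := by
    rw [hSVD]
    calc V * Sig⁻¹ * Uᴴ * (U * Sig * Vᴴ)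
        = V * Sig⁻¹ * (Uᴴ * U) * (Sig * Vᴴ) := by simp only [Matrix.mul_assoc]
    _ = V * (Sig⁻¹ * Sig) * Vᴴ := by rw [hU, Matrix.mul_one]; simp only [Matrix.mul_assoc]
    _ = V * Vᴴ := by rw [hiS, Matrix.mul_one]
  have hQ : IsMoorePenrose X (V * Sig⁻¹ * Uᴴ) := by
    refine ⟨?_, ?_, ?_, ?_⟩
    · calc X * (V * Sig⁻¹ * Uᴴ) * X = U * Uᴴ * X := by rw [hXQ]
      _ = U * (Uᴴ * U) * (Sig * Vᴴ) := by rw [hSVD]; simp only [Matrix.mul_assoc]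
      _ = X := by rw [hU, Matrix.mul_one, hSVD, Matrix.mul_assoc]
    · calc (V * Sig⁻¹ * Uᴴ) * X * (V * Sig⁻¹ * Uᴴ)
          = V * Vᴴ * (V * Sig⁻¹ * Uᴴ) := by rw [hQX]
      _ = V * (Vᴴ * V) * (Sig⁻¹ * Uᴴ) := by simp only [Matrix.mul_assoc]
      _ = V * Sig⁻¹ * Uᴴ := by rw [hV, Matrix.mul_one, Matrix.mul_assoc]
    · rw [hXQ, conjTranspose_mul, conjTranspose_conjTranspose]
    · rw [hQX, conjTranspose_mul, conjTranspose_conjTranspose]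
  have hPQ : P = V * Sig⁻¹ * Uᴴ := mp_unique X P _ hP hQ
  have key : U * Uᴴ * A * U = U * S := by
    rw [hA, hPQ, hS]
    calc U * Uᴴ * (Y * (V * Sig⁻¹ * Uᴴ)) * U
        = U * (Uᴴ * Y * (V * Sig⁻¹)) * (Uᴴ * U) := by simp only [Matrix.mul_assoc]
    _ = U * (Uᴴ * Y * (V * Sig⁻¹)) := by rw [hU, Matrix.mul_one]
  rw [hϑ]
  rw [show (U * Uᴴ * A).mulVec (U.mulVec v) = (U * Uᴴ * A * U).mulVec v by
    simp [Matrix.mulVec_mulVec]]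
  rw [key, ← Matrix.mulVec_mulVec, heig, Matrix.mulVec_smul]
end

section
/- Let X, Y ∈ ℂ^{n×m}, X = U Σ V* (reduced SVD), A = Y X⁺, S = U* Y V Σ^{−1}. Every non-zero eigenvalue of A is an eigenvalue of S: σ(A) \ {0} ⊆ σ(S). -/
open Matrix

theorem stmt16 {n m r : ℕ} (X Y : Matrix (Fin n) (Fin m) ℂ)
    (U : Matrix (Fin n) (Fin r) ℂ) (V : Matrix (Fin m) (Fin r) ℂ)
    (σ : Fin r → ℝ) (hσ : ∀ i, σ i ≠ 0)
    (Sig : Matrix (Fin r) (Fin r) ℂ)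
    (hSig : Sig = Matrix.diagonal fun i => (σ i : ℂ))
    (hU : Uᴴ * U = 1) (hV : Vᴴ * V = 1)
    (hSVD : X = U * Sig * Vᴴ) (hr : X.rank = r)
    (P : Matrix (Fin m) (Fin n) ℂ) (hP : IsMoorePenrose X P)
    (A : Matrix (Fin n) (Fin n) ℂ) (hA : A = Y * P)
    (S : Matrix (Fin r) (Fin r) ℂ) (hS : S = Uᴴ * Y * (V * Sig⁻¹))
    (lam : ℂ) (hlam : lam ≠ 0)
    (z : Fin n → ℂ) (hz : z ≠ 0) (hAz : A.mulVec z = lam • z) :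
    ∃ v : Fin r → ℂ, v ≠ 0 ∧ S.mulVec v = lam • v := by
  have hdet : IsUnit Sig.det := by
    rw [hSig, Matrix.det_diagonal]
    simp only [isUnit_iff_ne_zero]
    exact Finset.prod_ne_zero_iff.mpr fun i _ =>
      Complex.ofReal_ne_zero.mpr (hσ i)
  have hSig1 : Sig * Sig⁻¹ = 1 := Matrix.mul_nonsing_inv _ hdet
  have hSig2 : Sig⁻¹ * Sig = 1 := Matrix.nonsing_inv_mul _ hdet
  set Q : Matrix (Fin m) (Fin n) ℂ := V * Sig⁻¹ * Uᴴ with hQdef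
  have hXQ : X * Q = U * Uᴴ := by
    rw [hSVD, hQdef]
    simp only [Matrix.mul_assoc]
    rw [← Matrix.mul_assoc Vᴴ V, hV, Matrix.one_mul,
      ← Matrix.mul_assoc Sig Sig⁻¹, hSig1, Matrix.one_mul]
  have hQX : Q * X = V * Vᴴ := by
    rw [hSVD, hQdef]
    simp only [Matrix.mul_assoc]
    rw [← Matrix.mul_assoc Uᴴ U, hU, Matrix.one_mul,
      ← Matrix.mul_assoc Sig⁻¹ Sig, hSig2, Matrix.one_mul]
  have hQmp : IsMoorePenrose X Q := by
    refine ⟨?_, ?_, ?_, ?_⟩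
    · rw [hXQ, hSVD]
      simp only [Matrix.mul_assoc]
      rw [← Matrix.mul_assoc Uᴴ U, hU, Matrix.one_mul]
    · rw [hQX, hQdef]
      simp only [Matrix.mul_assoc]
      rw [← Matrix.mul_assoc Vᴴ V, hV, Matrix.one_mul]
    · rw [hXQ, conjTranspose_mul, conjTranspose_conjTranspose]
    · rw [hQX, conjTranspose_mul, conjTranspose_conjTranspose]
  have hPQ : P = Q := mp_unique X P Q hP hQmp
  have hAYQ : A = Y * Q := by rw [hA, hPQ]
  refine ⟨Uᴴ.mulVec z, ?_, ?_⟩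
  · intro hv
    apply hlam
    have hz0 : A.mulVec z = 0 := by
      have hassoc : Y * Q = (Y * (V * Sig⁻¹)) * Uᴴ := by
        rw [hQdef]; simp only [Matrix.mul_assoc]
      rw [hAYQ, hassoc, ← Matrix.mulVec_mulVec, hv, Matrix.mulVec_zero]
    rw [hAz] at hz0
    rcases smul_eq_zero.mp hz0 with h | h
    · exact h
    · exact absurd h hz
  · have hSU : S * Uᴴ = Uᴴ * (Y * Q) := by
      rw [hS, hQdef]
      simp only [Matrix.mul_assoc]
    calc S.mulVec (Uᴴ.mulVec z) = (S * Uᴴ).mulVec z := Matrix.mulVec_mulVec ..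
    _ = (Uᴴ * (Y * Q)).mulVec z := by rw [hSU]
    _ = Uᴴ.mulVec ((Y * Q).mulVec z) := (Matrix.mulVec_mulVec ..).symm
    _ = Uᴴ.mulVec (lam • z) := by rw [← hAYQ, hAz]
    _ = lam • Uᴴ.mulVec z := by rw [Matrix.mulVec_smul]
end

section
/- Let x₀,…,xₘ ∈ ℂⁿ, X = [x₀ … x_{m−1}] = U Σ V* (reduced SVD), Y = [x₁ … xₘ], A = Y X⁺, S = U* Y V Σ^{−1}, c = X⁺ xₘ, q = xₘ − Xc. If v is an eigenvector of S with eigenvalue λ ≠ 0 and ϑ = U v, then ζ = ϑ + (1/λ) ⟨eₘ, X⁺ ϑ⟩ · q is a non-zero eigenvector of A with eigenvalue λ. Moreover ζ = (1/λ) Y V Σ^{−1} v. -/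
open Matrix

theorem stmt17 {n m r : ℕ} (x : Fin (m + 2) → Fin n → ℂ)
    (X Y : Matrix (Fin n) (Fin (m + 1)) ℂ)
    (hX : X = Matrix.of fun i j => x j.castSucc i)
    (hY : Y = Matrix.of fun i j => x j.succ i)
    (U : Matrix (Fin n) (Fin r) ℂ) (V : Matrix (Fin (m + 1)) (Fin r) ℂ)
    (σ : Fin r → ℝ) (hσ : ∀ i, σ i ≠ 0)
    (Sig : Matrix (Fin r) (Fin r) ℂ)
    (hSig : Sig = Matrix.diagonal fun i => (σ i : ℂ))
    (hU : Uᴴ * U = 1) (hV : Vᴴ * V = 1)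
    (hSVD : X = U * Sig * Vᴴ) (hr : X.rank = r)
    (P : Matrix (Fin (m + 1)) (Fin n) ℂ) (hP : IsMoorePenrose X P)
    (A : Matrix (Fin n) (Fin n) ℂ) (hA : A = Y * P)
    (S : Matrix (Fin r) (Fin r) ℂ) (hS : S = Uᴴ * Y * (V * Sig⁻¹))
    (c : Fin (m + 1) → ℂ) (hc : c = P.mulVec (x (Fin.last (m + 1))))
    (q : Fin n → ℂ) (hq : q = x (Fin.last (m + 1)) - X.mulVec c)
    (lam : ℂ) (hlam : lam ≠ 0)
    (v : Fin r → ℂ) (hv : v ≠ 0) (heig : S.mulVec v = lam • v)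
    (ϑ : Fin n → ℂ) (hϑ : ϑ = U.mulVec v)
    (ζ : Fin n → ℂ)
    (hζ : ζ = ϑ + (lam⁻¹ * P.mulVec ϑ (Fin.last m)) • q) :
    ζ ≠ 0 ∧ A.mulVec ζ = lam • ζ ∧
      ζ = lam⁻¹ • (Y * (V * Sig⁻¹)).mulVec v := by
  have hσC : ∀ i, (σ i : ℂ) ≠ 0 := fun i => Complex.ofReal_ne_zero.mpr (hσ i)
  set D : Matrix (Fin r) (Fin r) ℂ := Matrix.diagonal fun i => ((σ i : ℂ))⁻¹ with hD
  have hSD : Sig * D = 1 := by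
    rw [hSig, hD, diagonal_mul_diagonal]
    have h : (fun i => (σ i : ℂ) * (σ i : ℂ)⁻¹) = fun _ => (1 : ℂ) :=
      funext fun i => mul_inv_cancel₀ (hσC i)
    rw [h, Matrix.diagonal_one]
  have hDS : D * Sig = 1 := by
    rw [hSig, hD, diagonal_mul_diagonal]
    have h : (fun i => (σ i : ℂ)⁻¹ * (σ i : ℂ)) = fun _ => (1 : ℂ) :=
      funext fun i => inv_mul_cancel₀ (hσC i)
    rw [h, Matrix.diagonal_one]
  have hSigInv : Sig⁻¹ = D := Matrix.inv_eq_right_inv hSD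
  set Q : Matrix (Fin (m + 1)) (Fin n) ℂ := V * D * Uᴴ with hQdef
  have hVV : ∀ (B : Matrix (Fin r) (Fin n) ℂ), Vᴴ * (V * B) = B := fun B => by
    rw [← Matrix.mul_assoc, hV, Matrix.one_mul]
  have hUU : ∀ {k : ℕ} (B : Matrix (Fin r) (Fin k) ℂ), Uᴴ * (U * B) = B := fun B => by
    rw [← Matrix.mul_assoc, hU, Matrix.one_mul]
  have hXQ : X * Q = U * Uᴴ := by
    rw [hSVD, hQdef]
    calc U * Sig * Vᴴ * (V * D * Uᴴ)
        = U * Sig * (Vᴴ * (V * (D * Uᴴ))) := by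
          simp only [Matrix.mul_assoc]
      _ = U * Sig * (D * Uᴴ) := by rw [hVV]
      _ = U * (Sig * D) * Uᴴ := by simp only [Matrix.mul_assoc]
      _ = U * Uᴴ := by rw [hSD, Matrix.mul_one]
  have hQX : Q * X = V * Vᴴ := by
    rw [hSVD, hQdef]
    calc V * D * Uᴴ * (U * Sig * Vᴴ)
        = V * D * (Uᴴ * (U * (Sig * Vᴴ))) := by simp only [Matrix.mul_assoc]
      _ = V * D * (Sig * Vᴴ) := by rw [hUU]
      _ = V * (D * Sig) * Vᴴ := by simp only [Matrix.mul_assoc]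
      _ = V * Vᴴ := by rw [hDS, Matrix.mul_one]
  have hQmp : IsMoorePenrose X Q := by
    refine ⟨?_, ?_, ?_, ?_⟩
    · rw [hXQ, hSVD]
      calc U * Uᴴ * (U * Sig * Vᴴ)
          = U * (Uᴴ * (U * (Sig * Vᴴ))) := by simp only [Matrix.mul_assoc]
        _ = U * (Sig * Vᴴ) := by rw [hUU]
        _ = U * Sig * Vᴴ := by rw [Matrix.mul_assoc]
    · rw [hQX, hQdef]
      calc V * Vᴴ * (V * D * Uᴴ)
          = V * (Vᴴ * (V * (D * Uᴴ))) := by simp only [Matrix.mul_assoc]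
        _ = V * (D * Uᴴ) := by rw [hVV]
        _ = V * D * Uᴴ := by rw [Matrix.mul_assoc]
    · rw [hXQ, conjTranspose_mul, conjTranspose_conjTranspose]
    · rw [hQX, conjTranspose_mul, conjTranspose_conjTranspose]
  have hPQ : P = Q := mp_unique X P Q hP hQmp
  have hPXc : P.mulVec (X.mulVec c) = c := by
    rw [hc, Matrix.mulVec_mulVec, Matrix.mulVec_mulVec, hP.2.1]
  have hPq : P.mulVec q = 0 := by
    rw [hq, Matrix.mulVec_sub, hPXc, hc, sub_self]
  have hQU : Q * U = V * D := by
    rw [hQdef, Matrix.mul_assoc, hU, Matrix.mul_one]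
  set u : Fin (m + 1) → ℂ := (V * D).mulVec v with hudef
  have hu : P.mulVec ϑ = u := by
    rw [hudef, hPQ, hϑ, Matrix.mulVec_mulVec, hQU]
  set w : Fin n → ℂ := Y.mulVec u with hwdef
  set M : Matrix (Fin n) (Fin n) ℂ := 1 - X * P with hMdef
  have hMX : M * X = 0 := by
    rw [hMdef, Matrix.sub_mul, Matrix.one_mul, hP.1, sub_self]
  have hMq : M.mulVec (x (Fin.last (m + 1))) = q := by
    rw [hMdef, Matrix.sub_mulVec, Matrix.one_mulVec, ← Matrix.mulVec_mulVec, ← hc, ← hq]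
  have hMY : M * Y = Matrix.of (fun i j => if j = Fin.last m then q i else 0) := by
    ext i j
    rw [Matrix.of_apply]
    by_cases hj : j = Fin.last m
    · subst hj
      rw [if_pos rfl, Matrix.mul_apply]
      have hcol : ∀ k, Y k (Fin.last m) = x (Fin.last (m + 1)) k := by
        intro k; rw [hY, Matrix.of_apply, Fin.succ_last]
      have hsum : ∑ k, M i k * Y k (Fin.last m)
          = M.mulVec (x (Fin.last (m + 1))) i := by
        simp only [Matrix.mulVec, dotProduct]
        exact Finset.sum_congr rfl fun k _ => by rw [hcol k]
      rw [hsum, hMq]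
    · rw [if_neg hj, Matrix.mul_apply]
      have hjm : (j : ℕ) < m := Fin.val_lt_last hj
      set j' : Fin (m + 1) := ⟨(j : ℕ) + 1, by omega⟩ with hj'
      have hcol : ∀ k, Y k j = X k j' := by
        intro k
        rw [hY, hX, Matrix.of_apply, Matrix.of_apply]
        exact congrFun (congrArg x (Fin.ext rfl)) k
      have hsum : ∑ k, M i k * Y k j = (M * X) i j' := by
        rw [Matrix.mul_apply]
        exact Finset.sum_congr rfl fun k _ => by rw [hcol k]
      rw [hsum, hMX, Matrix.zero_apply]
  have hkey : w = (X * P).mulVec w + u (Fin.last m) • q := by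
    have h1 : M.mulVec w = u (Fin.last m) • q := by
      rw [hwdef, Matrix.mulVec_mulVec, hMY]
      ext i
      simp only [Matrix.mulVec, dotProduct, Matrix.of_apply, ite_mul, zero_mul,
        Finset.sum_ite_eq', Finset.mem_univ, if_true, Pi.smul_apply, smul_eq_mul]
      ring
    rw [hMdef, Matrix.sub_mulVec, Matrix.one_mulVec, sub_eq_iff_eq_add] at h1
    exact h1.trans (add_comm _ _)
  have heig' : Uᴴ.mulVec w = lam • v := by
    have h : S.mulVec v = Uᴴ.mulVec w := by
      simp only [hS, hSigInv, hwdef, hudef, Matrix.mulVec_mulVec, Matrix.mul_assoc]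
    rw [← h, heig]
  have hXPw : (X * P).mulVec w = lam • ϑ := by
    rw [hPQ, hXQ, ← Matrix.mulVec_mulVec, heig', Matrix.mulVec_smul, hϑ]
  have hw : w = lam • ϑ + u (Fin.last m) • q := by rw [hkey, hXPw]
  have hzw : ζ = lam⁻¹ • w := by
    rw [hζ, hu, hw, smul_add, smul_smul, smul_smul, inv_mul_cancel₀ hlam, one_smul]
  have goal3 : ζ = lam⁻¹ • (Y * (V * Sig⁻¹)).mulVec v := by
    rw [hzw, hwdef, hudef, hSigInv, Matrix.mulVec_mulVec]
  have hPz : P.mulVec ζ = u := by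
    rw [hζ, Matrix.mulVec_add, Matrix.mulVec_smul, hPq, hu, smul_zero, add_zero]
  have goal2 : A.mulVec ζ = lam • ζ := by
    rw [hA, ← Matrix.mulVec_mulVec, hPz, ← hwdef, hzw, smul_smul,
      mul_inv_cancel₀ hlam, one_smul]
  have goal1 : ζ ≠ 0 := by
    intro h0
    have hu0 : u = 0 := by rw [← hPz, h0, Matrix.mulVec_zero]
    have hDv : D.mulVec v = 0 := by
      have h : Vᴴ.mulVec u = D.mulVec v := by
        rw [hudef, Matrix.mulVec_mulVec, ← Matrix.mul_assoc, hV, Matrix.one_mul]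
      rw [← h, hu0, Matrix.mulVec_zero]
    have hv0 : v = 0 := by
      have h := congrArg Sig.mulVec hDv
      rwa [Matrix.mulVec_mulVec, hSD, Matrix.one_mulVec, Matrix.mulVec_zero] at h
    exact hv hv0
  exact ⟨goal1, goal2, goal3⟩
end
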